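/- arXiv:math/0404381 — 4 statements merged into one kernel-verified Lean document; each statement's English description precedes it below -/
import Mathlib

section
/- Let H be a Hopf algebra, σ a left 2-cocycle on H, and define S₁:H→H by S₁(h)=Σσ⁻¹(S(h₂)⊗h₃)S(h₁), where the product · on A_σ = H (as a coalgebra) is h·k = Σσ(k₁⊗h₁)k₂h₂. Then Σ h₂·S₁(h₁) = ε(h)·1 for every h∈H. -/
/-
Write `c ↼ f = ∑ f(c₁) c₂` for the right action of the convolution algebra `(H ⊗ H)*` on the
coalgebra `H ⊗ H`, so that `(c ↼ f) ↼ g = c ↼ (f * g)`. The twisted product is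
`h · k = μ((k ⊗ h) ↼ σ)`, and because the antipode is anti-comultiplicative,
`∑ S₁(h₁) ⊗ h₂ = (∑ S(h₁) ⊗ h₂) ↼ σ⁻¹`. Hence
`∑ h₂ · S₁(h₁) = μ((∑ S(h₁) ⊗ h₂) ↼ σ⁻¹ * σ) = ∑ S(h₁) h₂ = ε(h) 1`.
-/

open TensorProduct Coalgebra HopfAlgebra

noncomputable section

variable (k H : Type) [Field k] [Ring H] [HopfAlgebra k H]

/-- Convolution product of two linear functionals on a coalgebra. -/
def conv {C : Type} [AddCommGroup C] [Module k C] [Coalgebra k C]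
    (f g : C →ₗ[k] k) : C →ₗ[k] k :=
  LinearMap.mul' k k ∘ₗ TensorProduct.map f g ∘ₗ Coalgebra.comul

variable {k H}

/-- `h ⊗ k ⊗ m ↦ ε(h)·σ(k ⊗ m)`. -/
def p23 (σ : H ⊗[k] H →ₗ[k] k) : H ⊗[k] (H ⊗[k] H) →ₗ[k] k :=
  σ ∘ₗ (TensorProduct.lid k (H ⊗[k] H)).toLinearMap ∘ₗ
    TensorProduct.map Coalgebra.counit LinearMap.id

/-- `h ⊗ k ⊗ m ↦ σ(h ⊗ km)`. -/
def p1_23 (σ : H ⊗[k] H →ₗ[k] k) : H ⊗[k] (H ⊗[k] H) →ₗ[k] k :=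
  σ ∘ₗ TensorProduct.map LinearMap.id (LinearMap.mul' k H)

/-- `h ⊗ k ⊗ m ↦ σ(h ⊗ k)·ε(m)`. -/
def p12 (σ : H ⊗[k] H →ₗ[k] k) : H ⊗[k] (H ⊗[k] H) →ₗ[k] k :=
  σ ∘ₗ TensorProduct.map LinearMap.id
    ((TensorProduct.rid k H).toLinearMap ∘ₗ TensorProduct.map LinearMap.id Coalgebra.counit)

/-- `h ⊗ k ⊗ m ↦ σ(hk ⊗ m)`. -/
def p12_3 (σ : H ⊗[k] H →ₗ[k] k) : H ⊗[k] (H ⊗[k] H) →ₗ[k] k :=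
  σ ∘ₗ TensorProduct.map (LinearMap.mul' k H) LinearMap.id ∘ₗ
    (TensorProduct.assoc k H H H).symm.toLinearMap

/-- `h ⊗ k ⊗ m ↦ σ(h ⊗ m)·ε(k)`. -/
def p13 (σ : H ⊗[k] H →ₗ[k] k) : H ⊗[k] (H ⊗[k] H) →ₗ[k] k :=
  σ ∘ₗ TensorProduct.map LinearMap.id
    ((TensorProduct.lid k H).toLinearMap ∘ₗ TensorProduct.map Coalgebra.counit LinearMap.id)

/-- σ is a (normalized) left 2-cocycle: `σ(h⊗1)=σ(1⊗h)=ε(h)` and the cocycle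
condition `Σσ(k₁⊗m₁)σ(h⊗k₂m₂)=Σσ(h₁⊗k₁)σ(h₂k₂⊗m)`, expressed as the
convolution identity `σ₂₃ * σ₁,₂₃ = σ₁₂ * σ₁₂,₃` of functionals on `H ⊗ H ⊗ H`. -/
def IsLeftCocycle (σ : H ⊗[k] H →ₗ[k] k) : Prop :=
  (∀ h : H, σ (h ⊗ₜ 1) = Coalgebra.counit h ∧ σ ((1 : H) ⊗ₜ h) = Coalgebra.counit h) ∧
  conv k (p23 σ) (p1_23 σ) = conv k (p12 σ) (p12_3 σ)

/-- σ' is a convolution inverse of σ. -/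
def IsConvInverse (σ σ' : H ⊗[k] H →ₗ[k] k) : Prop :=
  conv k σ σ' = Coalgebra.counit ∧ conv k σ' σ = Coalgebra.counit

/-- Iterated comultiplication `h ↦ h₁ ⊗ (h₂ ⊗ h₃)`. -/
def Delta3 : H →ₗ[k] H ⊗[k] (H ⊗[k] H) :=
  TensorProduct.map LinearMap.id Coalgebra.comul ∘ₗ Coalgebra.comul

/-- The twisted product of `A_σ`: `h ⊗ k ↦ h·k = Σ σ(k₁⊗h₁) k₂h₂`. -/
def tmul (σ : H ⊗[k] H →ₗ[k] k) : H ⊗[k] H →ₗ[k] H :=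
  (TensorProduct.lid k H).toLinearMap ∘ₗ
    TensorProduct.map (σ ∘ₗ (TensorProduct.comm k H H).toLinearMap)
      (LinearMap.mul' k H ∘ₗ (TensorProduct.comm k H H).toLinearMap) ∘ₗ
    (TensorProduct.tensorTensorTensorComm k H H H H).toLinearMap ∘ₗ
    TensorProduct.map Coalgebra.comul Coalgebra.comul

/-- `S₁(h) = Σ σ⁻¹(S(h₂)⊗h₃)·S(h₁)`. -/
def S1 (σ' : H ⊗[k] H →ₗ[k] k) : H →ₗ[k] H :=
  (TensorProduct.rid k H).toLinearMap ∘ₗ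
    TensorProduct.map (HopfAlgebra.antipode (R := k))
      (σ' ∘ₗ TensorProduct.map (HopfAlgebra.antipode (R := k)) LinearMap.id) ∘ₗ Delta3

open WithConv in
theorem HopfAlgebra.comul_comp_antipode {R A : Type*} [CommSemiring R] [Semiring A]
    [HopfAlgebra R A] :
    comul ∘ₗ antipode R =
      map (antipode R) (antipode R) ∘ₗ (TensorProduct.comm R A A).toLinearMap ∘ₗ comul := by
  -- Both sides are convolution inverses of `δ` in `Hom(A, A ⊗ A)`: `δ * (δ ∘ S) = 1` is in
  -- Mathlib, and `δ = ι₁ * ι₂` gives `(ι₂ S * ι₁ S) * δ = 1`.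
  set ι₁ : A →ₐ[R] A ⊗[R] A := Algebra.TensorProduct.includeLeft
  set ι₂ : A →ₐ[R] A ⊗[R] A := Algebra.TensorProduct.includeRight
  have comul_eq : toConv (comul : A →ₗ[R] A ⊗[R] A) =
      toConv ι₁.toLinearMap * toConv ι₂.toLinearMap := by
    have : LinearMap.mul' R (A ⊗[R] A) ∘ₗ map ι₁.toLinearMap ι₂.toLinearMap = LinearMap.id := by
      ext; simp [ι₁, ι₂]
    rw [LinearMap.convMul_def, ofConv_toConv, ofConv_toConv, ← LinearMap.comp_assoc, this,
      LinearMap.id_comp]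
  have swapped_eq : toConv (map (antipode R) (antipode R) ∘ₗ
      (TensorProduct.comm R A A).toLinearMap ∘ₗ comul) =
      toConv (ι₂.toLinearMap ∘ₗ antipode R) * toConv (ι₁.toLinearMap ∘ₗ antipode R) := by
    have : LinearMap.mul' R (A ⊗[R] A) ∘ₗ
        map (ι₂.toLinearMap ∘ₗ antipode R) (ι₁.toLinearMap ∘ₗ antipode R) =
        map (antipode R) (antipode R) ∘ₗ (TensorProduct.comm R A A).toLinearMap := by
      ext; simp [ι₁, ι₂]
    rw [LinearMap.convMul_def, ofConv_toConv, ofConv_toConv]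
    conv_rhs => rw [← LinearMap.comp_assoc, this, LinearMap.comp_assoc]
  have antipode_mul_cancel (f : A →ₐ[R] A ⊗[R] A) :
      toConv (f.toLinearMap ∘ₗ antipode R) * toConv f.toLinearMap = 1 := by
    have := LinearMap.algHom_comp_convMul_distrib f (toConv (antipode R)) (toConv LinearMap.id)
    rw [LinearMap.antipode_mul_id, ofConv_toConv, ofConv_toConv, LinearMap.comp_id] at this
    apply ofConv_injective
    rw [← this]
    ext; simp
  apply toConv_injective
  refine (left_inv_eq_right_inv (a := toConv comul) ?_
    (LinearMap.comul_right_inv (R := R) (C := A))).symm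
  rw [swapped_eq, comul_eq, mul_assoc, ← mul_assoc (toConv (ι₁.toLinearMap ∘ₗ antipode R)),
    antipode_mul_cancel, one_mul, antipode_mul_cancel]

section RightHit
variable {R C : Type*} [CommSemiring R] [AddCommMonoid C] [Module R C] [Coalgebra R C]

/-- The right action `c ↼ f = ∑ f(c₁) c₂` of the dual algebra `C*` on `C`. -/
def rightHit (f : C →ₗ[R] R) : C →ₗ[R] C :=
  (TensorProduct.lid R C).toLinearMap ∘ₗ f.rTensor C ∘ₗ comul

open WithConv in
lemma comp_rightHit (f g : C →ₗ[R] R) : g ∘ₗ rightHit f = (toConv f * toConv g).ofConv := by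
  have : g ∘ₗ (TensorProduct.lid R C).toLinearMap ∘ₗ f.rTensor C =
      LinearMap.mul' R R ∘ₗ map f g := by
    ext; simp
  rw [rightHit, ← LinearMap.comp_assoc, ← LinearMap.comp_assoc, LinearMap.comp_assoc _ _ g, this]
  rfl

lemma comul_comp_rightHit (f : C →ₗ[R] R) :
    comul ∘ₗ rightHit f = (rightHit f).rTensor C ∘ₗ comul := by
  have comul_comp_lid : comul ∘ₗ (TensorProduct.lid R C).toLinearMap =
      (TensorProduct.lid R (C ⊗[R] C)).toLinearMap ∘ₗ (comul (R := R) (A := C)).lTensor R := by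
    ext; simp
  have lid_comp_rTensor : (TensorProduct.lid R (C ⊗[R] C)).toLinearMap ∘ₗ f.rTensor (C ⊗[R] C) =
      ((TensorProduct.lid R C).toLinearMap ∘ₗ f.rTensor C).rTensor C ∘ₗ
        (TensorProduct.assoc R C C C).symm.toLinearMap := by
    ext; simp [TensorProduct.smul_tmul']
  calc comul ∘ₗ rightHit f
      = (TensorProduct.lid R (C ⊗[R] C)).toLinearMap ∘ₗ f.rTensor (C ⊗[R] C) ∘ₗ
          comul.lTensor C ∘ₗ comul := by
        rw [rightHit, ← LinearMap.comp_assoc, comul_comp_lid, LinearMap.comp_assoc,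
          ← LinearMap.comp_assoc _ (f.rTensor C), LinearMap.lTensor_comp_rTensor,
          ← LinearMap.rTensor_comp_lTensor, LinearMap.comp_assoc]
    _ = (rightHit f).rTensor C ∘ₗ comul := by
        rw [← coassoc, ← LinearMap.comp_assoc, lid_comp_rTensor]
        simp only [rightHit, LinearMap.rTensor_comp, LinearMap.comp_assoc,
          LinearEquiv.symm_comp_assoc]

open WithConv in
lemma rightHit_comp_rightHit (f g : C →ₗ[R] R) :
    rightHit g ∘ₗ rightHit f = rightHit (toConv f * toConv g).ofConv := by
  rw [rightHit, LinearMap.comp_assoc, LinearMap.comp_assoc, comul_comp_rightHit,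
    ← LinearMap.comp_assoc _ _ (LinearMap.rTensor C g), ← LinearMap.rTensor_comp, comp_rightHit,
    rightHit]

lemma rightHit_counit : rightHit (counit : C →ₗ[R] R) = LinearMap.id := by
  rw [rightHit, rTensor_counit_comp_comul]; ext; simp

end RightHit

lemma tmul_comp_comm (σ : H ⊗[k] H →ₗ[k] k) :
    _root_.tmul σ ∘ₗ (TensorProduct.comm k H H).toLinearMap =
      LinearMap.mul' k H ∘ₗ rightHit σ := by
  have reindex : (TensorProduct.lid k H).toLinearMap ∘ₗ
      map (σ ∘ₗ (TensorProduct.comm k H H).toLinearMap)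
        (LinearMap.mul' k H ∘ₗ (TensorProduct.comm k H H).toLinearMap) ∘ₗ
      (tensorTensorTensorComm k H H H H).toLinearMap ∘ₗ
      (TensorProduct.comm k (H ⊗[k] H) (H ⊗[k] H)).toLinearMap =
      LinearMap.mul' k H ∘ₗ (TensorProduct.lid k (H ⊗[k] H)).toLinearMap ∘ₗ
        σ.rTensor (H ⊗[k] H) ∘ₗ (tensorTensorTensorComm k H H H H).toLinearMap := by
    ext; simp
  simp only [_root_.tmul, rightHit, TensorProduct.comul_def, AlgebraTensorModule.map_eq,
    AlgebraTensorModule.tensorTensorTensorComm_eq, LinearMap.comp_assoc,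
    TensorProduct.map_comp_comm_eq]
  simp only [← LinearMap.comp_assoc] at reindex ⊢
  rw [reindex]

lemma rTensor_S1_comp_comul (f : H ⊗[k] H →ₗ[k] k) :
    (S1 f).rTensor H ∘ₗ comul = rightHit f ∘ₗ (antipode k).rTensor H ∘ₗ comul := by
  simp only [rightHit, S1, Delta3, TensorProduct.comul_def, LinearMap.rTensor_def,
    LinearMap.comp_assoc, coassoc_simps, HopfAlgebra.comul_comp_antipode]
  -- Both sides are now `h ↦ ∑ φ(h₂) S(h₁) ⊗ h₃` with `φ x = ∑ f(S x₁ ⊗ x₂)`, bracketed differently.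
  generalize f ∘ₗ map (antipode k) LinearMap.id ∘ₗ comul = φ
  have comul_comp_comm : map comul LinearMap.id ∘ₗ (TensorProduct.comm k H H).toLinearMap ∘ₗ
      comul = (TensorProduct.comm k H (H ⊗[k] H)).toLinearMap ∘ₗ comul.lTensor H ∘ₗ
        (comul : H →ₗ[k] _) := by
    rw [← LinearMap.comp_assoc, TensorProduct.map_comp_comm_eq, LinearMap.comp_assoc]; rfl
  have comul_comp_comul :
      map (antipode k ∘ₗ (TensorProduct.rid k H).toLinearMap ∘ₗ map LinearMap.id φ ∘ₗ comul)
        LinearMap.id ∘ₗ (comul : H →ₗ[k] _) =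
      map (antipode k ∘ₗ (TensorProduct.rid k H).toLinearMap ∘ₗ map LinearMap.id φ)
        LinearMap.id ∘ₗ (TensorProduct.assoc k H H H).symm.toLinearMap ∘ₗ comul.lTensor H ∘ₗ
        (comul : H →ₗ[k] _) := by
    rw [coassoc_symm]; simp only [coassoc_simps]
  rw [comul_comp_comm, comul_comp_comul]
  simp only [← LinearMap.comp_assoc]
  congr 2
  ext
  simp [TensorProduct.smul_tmul']

theorem stmt4_general (σ σ' : H ⊗[k] H →ₗ[k] k)
    (hσ' : IsConvInverse σ σ') :
    tmul σ ∘ₗ TensorProduct.map LinearMap.id (S1 σ') ∘ₗ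
        (TensorProduct.comm k H H).toLinearMap ∘ₗ Coalgebra.comul
      = Algebra.linearMap k H ∘ₗ Coalgebra.counit := by
  have hσ'σ : (WithConv.toConv σ' * WithConv.toConv σ).ofConv = counit := hσ'.2
  calc _root_.tmul σ ∘ₗ map LinearMap.id (S1 σ') ∘ₗ (TensorProduct.comm k H H).toLinearMap ∘ₗ comul
      = LinearMap.mul' k H ∘ₗ rightHit σ ∘ₗ (S1 σ').rTensor H ∘ₗ comul := by
        rw [← LinearMap.comp_assoc _ (TensorProduct.comm k H H).toLinearMap,
          TensorProduct.map_comp_comm_eq, LinearMap.comp_assoc,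
          ← LinearMap.comp_assoc _ _ (_root_.tmul σ), tmul_comp_comm]
        rfl
    _ = LinearMap.mul' k H ∘ₗ (antipode k).rTensor H ∘ₗ comul := by
        rw [rTensor_S1_comp_comul, ← LinearMap.comp_assoc _ (rightHit σ') (rightHit σ),
          rightHit_comp_rightHit, hσ'σ, rightHit_counit, LinearMap.id_comp]
    _ = Algebra.linearMap k H ∘ₗ counit := mul_antipode_rTensor_comul

/-- `Σ h₂ · S₁(h₁) = ε(h)·1` in `A_σ` (twisted product
`h·k = Σσ(k₁⊗h₁)k₂h₂`). -/
theorem stmt4 (σ σ' : H ⊗[k] H →ₗ[k] k)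
    (hσ : IsLeftCocycle σ) (hσ' : IsConvInverse σ σ') :
    tmul σ ∘ₗ TensorProduct.map LinearMap.id (S1 σ') ∘ₗ
        (TensorProduct.comm k H H).toLinearMap ∘ₗ Coalgebra.comul
      = Algebra.linearMap k H ∘ₗ Coalgebra.counit :=
  stmt4_general σ σ' hσ'
end
end

section
/- Let H be a finite-dimensional Hopf algebra, ζ∈H* a nonzero left integral for H*, and v:H→H* defined by v(h)(k)=ζ(kS(h)). Then for all h,k∈H: Σ⟨v(h), k₂⟩ k₁ = Σ⟨v(h₁), k⟩ h₂. -/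
/-! The left integral ζ satisfies `Σ y₁ ζ(y₂) = ζ(y) 1`. Applied to `y = x S(h)`, together with
`Δ(S h) = S h₂ ⊗ S h₁`, this says that for fixed `x` the map `h ↦ ζ(x S(h)) 1` is the convolution
`L * S` with `L(h) = Σ ⟨v(h), x₂⟩ x₁`. Hence `h ↦ Σ ⟨v(h₁), x⟩ h₂`, which is
`(h ↦ ζ(x S(h)) 1) * id`, equals `L * S * id = L`. -/

open TensorProduct Coalgebra HopfAlgebra

noncomputable section

variable (k H : Type) [Field k] [Ring H] [HopfAlgebra k H]

variable {k H}

open WithConv LinearMap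

namespace HopfAlgebra

variable {R A : Type*} [CommSemiring R] [Semiring A] [HopfAlgebra R A]

lemma toConv_includeLeft_mul_includeRight :
    toConv (Algebra.TensorProduct.includeLeft : A →ₐ[R] A ⊗[R] A).toLinearMap *
      toConv (Algebra.TensorProduct.includeRight : A →ₐ[R] A ⊗[R] A).toLinearMap =
      toConv (comul (R := R) (A := A)) := by
  have h : mul' R (A ⊗[R] A) ∘ₗ TensorProduct.map
      (Algebra.TensorProduct.includeLeft : A →ₐ[R] A ⊗[R] A).toLinearMap
      (Algebra.TensorProduct.includeRight : A →ₐ[R] A ⊗[R] A).toLinearMap = .id := by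
    ext; simp
  rw [LinearMap.convMul_def, ← comp_assoc, h, id_comp]

lemma toConv_includeRight_comp_mul_includeLeft_comp (f g : A →ₗ[R] A) :
    toConv ((Algebra.TensorProduct.includeRight : A →ₐ[R] A ⊗[R] A).toLinearMap ∘ₗ f) *
      toConv ((Algebra.TensorProduct.includeLeft : A →ₐ[R] A ⊗[R] A).toLinearMap ∘ₗ g) =
      toConv (TensorProduct.map g f ∘ₗ (TensorProduct.comm R A A).toLinearMap ∘ₗ comul) := by
  have h : mul' R (A ⊗[R] A) ∘ₗ TensorProduct.map
      ((Algebra.TensorProduct.includeRight : A →ₐ[R] A ⊗[R] A).toLinearMap ∘ₗ f)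
      ((Algebra.TensorProduct.includeLeft : A →ₐ[R] A ⊗[R] A).toLinearMap ∘ₗ g) =
      TensorProduct.map g f ∘ₗ (TensorProduct.comm R A A).toLinearMap := by
    ext; simp
  rw [LinearMap.convMul_def, ← comp_assoc, h, comp_assoc]

lemma toConv_algHom_comp_antipode_mul {B : Type*} [Semiring B] [Algebra R B] (φ : A →ₐ[R] B) :
    toConv (φ.toLinearMap ∘ₗ antipode R) * toConv φ.toLinearMap = 1 :=
  calc _ = toConv (φ.toLinearMap ∘ₗ (toConv (antipode R) * toConv (.id : A →ₗ[R] A)).ofConv) := by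
        rw [algHom_comp_convMul_distrib]; rfl
    _ = 1 := by rw [antipode_mul_id]; ext; simp

/-- In the convolution algebra `Hom(A, A ⊗ A)`, `Δ ∘ S` is a right inverse of `Δ`, and the right
side, being `(1 ⊗ S(·)) * (S(·) ⊗ 1)`, is a left inverse of `Δ = (· ⊗ 1) * (1 ⊗ ·)`. -/
lemma comul_comp_antipode_s6 :
    comul ∘ₗ antipode R =
      TensorProduct.map (antipode R) (antipode R) ∘ₗ (TensorProduct.comm R A A).toLinearMap ∘ₗ
        (comul : A →ₗ[R] A ⊗[R] A) := by
  have h_inv : toConv (TensorProduct.map (antipode R) (antipode R) ∘ₗ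
      (TensorProduct.comm R A A).toLinearMap ∘ₗ comul) * toConv (comul : A →ₗ[R] A ⊗[R] A) = 1 := by
    rw [← toConv_includeRight_comp_mul_includeLeft_comp, ← toConv_includeLeft_mul_includeRight,
      mul_assoc, ← mul_assoc (toConv (Algebra.TensorProduct.includeLeft.toLinearMap ∘ₗ _)),
      toConv_algHom_comp_antipode_mul, one_mul, toConv_algHom_comp_antipode_mul]
  apply toConv_injective
  rw [← one_mul (toConv (comul ∘ₗ antipode R)), ← h_inv, mul_assoc, comul_right_inv, mul_one]

end HopfAlgebra

lemma conv_eq_ofConv_mul (ξ ζ : H →ₗ[k] k) : conv k ξ ζ = (toConv ξ * toConv ζ).ofConv := rfl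

lemma rid_lTensor_mul_tmul {K A : Type*} [CommSemiring K] [Semiring A] [Algebra K A]
    (f : A →ₗ[K] K) (t : A ⊗[K] A) (u v : A) :
    TensorProduct.rid K A (lTensor A f (t * (u ⊗ₜ v))) =
      TensorProduct.rid K A (lTensor A (f ∘ₗ mulRight K v) t) * u := by
  induction t using TensorProduct.induction_on with
  | zero => simp
  | tmul a b => simp
  | add s t hs ht => simp [add_mul, hs, ht]

lemma rid_lTensor_comul_of_integral {ζ : H →ₗ[k] k} (hint : ∀ ξ : H →ₗ[k] k, conv k ξ ζ = ξ 1 • ζ)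
    (y : H) : TensorProduct.rid k H (lTensor H ζ (comul y)) = ζ y • 1 := by
  refine Module.eval_apply_injective k (LinearMap.ext fun ξ => ?_)
  have hξ := congr($(hint ξ) y)
  rw [conv_eq_ofConv_mul, (ℛ k y).convMul_apply] at hξ
  rw [← (ℛ k y).eq]
  simpa [mul_comm] using hξ

/-- `h ⊗ x ↦ Σ ⟨v(h), x₂⟩ x₁` -/
def pairingComulRight (ζ : H →ₗ[k] k) : H ⊗[k] H →ₗ[k] H :=
  (TensorProduct.rid k H).toLinearMap ∘ₗ
    TensorProduct.map LinearMap.id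
      (ζ ∘ₗ LinearMap.mul' k H ∘ₗ
        TensorProduct.map LinearMap.id (HopfAlgebra.antipode (R := k)) ∘ₗ
        (TensorProduct.comm k H H).toLinearMap) ∘ₗ
    (TensorProduct.leftComm k H H H).toLinearMap ∘ₗ
    TensorProduct.map LinearMap.id Coalgebra.comul

/-- `h ⊗ x ↦ Σ ⟨v(h₁), x⟩ h₂` -/
def pairingComulLeft (ζ : H →ₗ[k] k) : H ⊗[k] H →ₗ[k] H :=
  (TensorProduct.rid k H).toLinearMap ∘ₗ
    TensorProduct.map LinearMap.id
      (ζ ∘ₗ LinearMap.mul' k H ∘ₗ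
        TensorProduct.map LinearMap.id (HopfAlgebra.antipode (R := k)) ∘ₗ
        (TensorProduct.comm k H H).toLinearMap) ∘ₗ
    (TensorProduct.leftComm k H H H).toLinearMap ∘ₗ
    (TensorProduct.assoc k H H H).toLinearMap ∘ₗ
    TensorProduct.map Coalgebra.comul LinearMap.id

lemma pairingComulRight_tmul (ζ : H →ₗ[k] k) (h x : H) :
    pairingComulRight ζ (h ⊗ₜ x) =
      TensorProduct.rid k H (lTensor H (ζ ∘ₗ mulRight k (antipode k h)) (comul x)) := by
  simp [pairingComulRight, ← (ℛ k x).eq, TensorProduct.tmul_sum]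

lemma pairingComulLeft_curry_flip (ζ : H →ₗ[k] k) (x : H) :
    (TensorProduct.curry (pairingComulLeft ζ)).flip x =
      (toConv (Algebra.linearMap k H ∘ₗ ζ ∘ₗ mulLeft k x ∘ₗ antipode k) *
        toConv (.id : H →ₗ[k] H)).ofConv := by
  ext h
  rw [(ℛ k h).convMul_apply]
  simp [pairingComulLeft, ← (ℛ k h).eq, TensorProduct.sum_tmul, Algebra.smul_def]

lemma integral_comp_mulLeft_antipode_eq_convMul {ζ : H →ₗ[k] k}
    (hint : ∀ ξ : H →ₗ[k] k, conv k ξ ζ = ξ 1 • ζ) (x : H) :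
    toConv (Algebra.linearMap k H ∘ₗ ζ ∘ₗ mulLeft k x ∘ₗ antipode k) =
      toConv ((TensorProduct.curry (pairingComulRight ζ)).flip x) * toConv (antipode k) := by
  ext h
  rw [(ℛ k h).convMul_apply]
  calc algebraMap k H (ζ (x * antipode k h))
      = TensorProduct.rid k H (lTensor H ζ (comul (x * antipode k h))) := by
        rw [rid_lTensor_comul_of_integral hint, Algebra.algebraMap_eq_smul_one]
    _ = ∑ i ∈ (ℛ k h).index, TensorProduct.rid k H (lTensor H ζ
          (comul x * (antipode k ((ℛ k h).right i) ⊗ₜ antipode k ((ℛ k h).left i)))) := by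
        rw [Bialgebra.comul_mul, ← LinearMap.comp_apply comul (antipode k),
          HopfAlgebra.comul_comp_antipode_s6]
        simp [← (ℛ k h).eq, Finset.mul_sum]
    _ = _ := by simp [rid_lTensor_mul_tmul, pairingComulRight_tmul]

lemma pairingComulRight_eq_pairingComulLeft {ζ : H →ₗ[k] k}
    (hint : ∀ ξ : H →ₗ[k] k, conv k ξ ζ = ξ 1 • ζ) :
    pairingComulRight ζ = pairingComulLeft ζ := by
  refine TensorProduct.ext' fun h x => ?_
  have hx : toConv ((TensorProduct.curry (pairingComulLeft ζ)).flip x) =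
      toConv ((TensorProduct.curry (pairingComulRight ζ)).flip x) := by
    rw [pairingComulLeft_curry_flip, toConv_ofConv, integral_comp_mulLeft_antipode_eq_convMul hint,
      mul_assoc, antipode_mul_id, mul_one]
  exact congr($hx h).symm

theorem stmt6_general (ζ : H →ₗ[k] k)
    (hint : ∀ ξ : H →ₗ[k] k, conv k ξ ζ = ξ 1 • ζ) :
    (TensorProduct.rid k H).toLinearMap ∘ₗ
        TensorProduct.map LinearMap.id
          (ζ ∘ₗ LinearMap.mul' k H ∘ₗ
            TensorProduct.map LinearMap.id (HopfAlgebra.antipode (R := k)) ∘ₗ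
            (TensorProduct.comm k H H).toLinearMap) ∘ₗ
        (TensorProduct.leftComm k H H H).toLinearMap ∘ₗ
        TensorProduct.map LinearMap.id Coalgebra.comul
      =
    (TensorProduct.rid k H).toLinearMap ∘ₗ
        TensorProduct.map LinearMap.id
          (ζ ∘ₗ LinearMap.mul' k H ∘ₗ
            TensorProduct.map LinearMap.id (HopfAlgebra.antipode (R := k)) ∘ₗ
            (TensorProduct.comm k H H).toLinearMap) ∘ₗ
        (TensorProduct.leftComm k H H H).toLinearMap ∘ₗ
        (TensorProduct.assoc k H H H).toLinearMap ∘ₗ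
        TensorProduct.map Coalgebra.comul LinearMap.id :=
  pairingComulRight_eq_pairingComulLeft hint

/-- if ζ is a nonzero left integral for `H*` and `v(h) = ζ(–·S(h))`, then
`Σ ⟨v(h),k₂⟩ k₁ = Σ ⟨v(h₁),k⟩ h₂`, expressed as an equality of linear maps `H ⊗ H → H`
(first slot `h`, second slot `k`). -/
theorem stmt6 [FiniteDimensional k H] (ζ : H →ₗ[k] k) (hζ : ζ ≠ 0)
    (hint : ∀ ξ : H →ₗ[k] k, conv k ξ ζ = ξ 1 • ζ) :
    (TensorProduct.rid k H).toLinearMap ∘ₗ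
        TensorProduct.map LinearMap.id
          (ζ ∘ₗ LinearMap.mul' k H ∘ₗ
            TensorProduct.map LinearMap.id (HopfAlgebra.antipode (R := k)) ∘ₗ
            (TensorProduct.comm k H H).toLinearMap) ∘ₗ
        (TensorProduct.leftComm k H H H).toLinearMap ∘ₗ
        TensorProduct.map LinearMap.id Coalgebra.comul
      =
    (TensorProduct.rid k H).toLinearMap ∘ₗ
        TensorProduct.map LinearMap.id
          (ζ ∘ₗ LinearMap.mul' k H ∘ₗ
            TensorProduct.map LinearMap.id (HopfAlgebra.antipode (R := k)) ∘ₗ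
            (TensorProduct.comm k H H).toLinearMap) ∘ₗ
        (TensorProduct.leftComm k H H H).toLinearMap ∘ₗ
        (TensorProduct.assoc k H H H).toLinearMap ∘ₗ
        TensorProduct.map Coalgebra.comul LinearMap.id :=
  stmt6_general ζ hint
end
end

section
/- Let H be a finite-dimensional Hopf algebra with bijective antipode, ζ a nonzero left integral for H*, v(h)=ζ(·S(h)), and w(h)=(S⁻¹)*(v(h)), i.e. w(h)(k)=ζ(S⁻¹(k)S(h)). Then for all h,k∈H: Σ⟨w(h), k₁⟩ S⁻¹(k₂) = Σ⟨w(h₁), k⟩ h₂, and equivalently Σ⟨w(h), k₁⟩ k₂ = Σ⟨w(h₁), k⟩ S(h₂). -/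
/-!
For fixed `u ∈ H` let `P_u(a) = Σ ζ(u₂ a) u₁` (`comulContract ζ u`). The antipode is
anti-comultiplicative, so `Δ(u S(y)) = Σ u₁ S(y₂) ⊗ u₂ S(y₁)`, and the left-integral property
`Σ ζ(x₂) x₁ = ζ(x) 1`, applied to `x = u S(y)`, says `(P_u ∘ S) * S = ζ(u S(-)) 1` in the
convolution algebra `End_k(H)`. Multiplying on the right by `id`, the convolution inverse of `S`,
gives `P_u(S h) = Σ ζ(u S(h₁)) h₂`. As `S⁻¹` is anti-comultiplicative too, for `u = S⁻¹(k)` the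
left-hand side is `Σ ζ(S⁻¹(k₁) S(h)) S⁻¹(k₂)`: this is the first identity, and applying `S` to
it gives the second.
-/

open TensorProduct Coalgebra HopfAlgebra

noncomputable section

variable (k H : Type) [Field k] [Ring H] [HopfAlgebra k H]

variable {k H}

open WithConv

section AntiComultiplicative

variable {R A B ι : Type*} [CommSemiring R] [AddCommMonoid A] [Module R A]
    [AddCommMonoid B] [Module R B] [CoalgebraStruct R A] [CoalgebraStruct R B]

def IsAntiComultiplicative (f : A →ₗ[R] B) : Prop :=
  comul ∘ₗ f = map f f ∘ₗ (TensorProduct.comm R A A).toLinearMap ∘ₗ comul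

@[simps]
def Coalgebra.Repr.antiInduced {a : A} (r : Repr R a ι) {f : A →ₗ[R] B}
    (hf : IsAntiComultiplicative f) : Repr R (f a) ι where
  index := r.index
  left := f ∘ r.right
  right := f ∘ r.left
  eq := by rw [← LinearMap.comp_apply, hf]; simp [← r.eq, map_sum]

lemma IsAntiComultiplicative.of_inverse {f : A →ₗ[R] B} {g : B →ₗ[R] A}
    (hf : IsAntiComultiplicative f) (hgf : g ∘ₗ f = .id) (hfg : f ∘ₗ g = .id) :
    IsAntiComultiplicative g := by
  have hgf' : ∀ a, g (f a) = a := LinearMap.congr_fun hgf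
  have hinv : (map g g ∘ₗ (TensorProduct.comm R B B).toLinearMap) ∘ₗ
      (map f f ∘ₗ (TensorProduct.comm R A A).toLinearMap) = .id := by
    ext; simp [hgf']
  calc comul ∘ₗ g
      = (map g g ∘ₗ (TensorProduct.comm R B B).toLinearMap) ∘ₗ
          (map f f ∘ₗ (TensorProduct.comm R A A).toLinearMap) ∘ₗ comul ∘ₗ g := by
        rw [← LinearMap.comp_assoc, hinv, LinearMap.id_comp]
    _ = (map g g ∘ₗ (TensorProduct.comm R B B).toLinearMap) ∘ₗ comul ∘ₗ f ∘ₗ g := by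
        rw [← LinearMap.comp_assoc g f comul, hf]
        simp only [LinearMap.comp_assoc]
    _ = map g g ∘ₗ (TensorProduct.comm R B B).toLinearMap ∘ₗ comul := by
        rw [hfg, LinearMap.comp_id, LinearMap.comp_assoc]

end AntiComultiplicative

namespace HopfAlgebra

variable {R A ι : Type*} [CommSemiring R] [Semiring A] [HopfAlgebra R A]

lemma sum_antipode_tmul_one_mul_comul {a : A} (r : Repr R a ι) :
    ∑ i ∈ r.index, (antipode R (r.left i) ⊗ₜ[R] (1 : A)) * comul (r.right i) = 1 ⊗ₜ a := by
  have hmap : (LinearMap.mul' R A ∘ₗ (antipode R).rTensor A).rTensor A ∘ₗ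
      (TensorProduct.assoc R A A A).symm.toLinearMap ∘ₗ comul.lTensor A ∘ₗ comul =
      TensorProduct.mk R A A 1 := by
    rw [coassoc_symm, ← LinearMap.comp_assoc, ← LinearMap.rTensor_comp, LinearMap.comp_assoc,
      mul_antipode_rTensor_comul, LinearMap.rTensor_comp, LinearMap.comp_assoc,
      rTensor_counit_comp_comul]
    ext; simp
  have h := congr($hmap a)
  simp only [LinearMap.comp_apply, ← r.eq] at h
  simpa [map_sum, ← (ℛ R (r.right _)).eq, Finset.mul_sum, TensorProduct.tmul_sum] using h

lemma comul_left_inv :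
    toConv (TensorProduct.map (antipode R) (antipode R) ∘ₗ
      (TensorProduct.comm R A A).toLinearMap ∘ₗ comul) * toConv comul = 1 := by
  ext c
  let Ψ : A ⊗[R] (A ⊗[R] A) →ₗ[R] A ⊗[R] A :=
    LinearMap.mul' R (A ⊗[R] A) ∘ₗ
      TensorProduct.map (TensorProduct.map (antipode R) (antipode R) ∘ₗ
        (TensorProduct.comm R A A).toLinearMap) comul ∘ₗ
      (TensorProduct.assoc R A A A).symm.toLinearMap
  -- coassociativity turns `Σ (S c₁₂ ⊗ S c₁₁) Δ(c₂)` into `Σ (1 ⊗ S c₁)(S c₂₁ ⊗ 1) Δ(c₂₂)`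
  have hcoassoc := congr(Ψ $(sum_tmul_tmul_eq (ℛ R c) (fun i ↦ ℛ R ((ℛ R c).left i))
    (fun i ↦ ℛ R ((ℛ R c).right i))))
  simp only [Ψ, map_sum, LinearMap.comp_apply, LinearEquiv.coe_coe,
    TensorProduct.assoc_symm_tmul, TensorProduct.map_tmul, TensorProduct.comm_tmul,
    LinearMap.mul'_apply] at hcoassoc
  rw [(ℛ R c).convMul_apply, LinearMap.convOne_apply]
  calc _ = _ := by simp [← (ℛ R ((ℛ R c).left _)).eq, map_sum, Finset.sum_mul]
    _ = _ := hcoassoc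
    _ = ∑ i ∈ (ℛ R c).index, ((1 : A) ⊗ₜ[R] antipode R ((ℛ R c).left i)) *
          ∑ j ∈ (ℛ R ((ℛ R c).right i)).index,
            (antipode R ((ℛ R ((ℛ R c).right i)).left j) ⊗ₜ[R] (1 : A)) *
              comul ((ℛ R ((ℛ R c).right i)).right j) := by
      simp [Finset.mul_sum, ← mul_assoc]
    _ = _ := by
      simp only [sum_antipode_tmul_one_mul_comul, Algebra.TensorProduct.tmul_mul_tmul, one_mul,
        ← TensorProduct.tmul_sum, sum_antipode_mul_eq_algebraMap_counit,
        Algebra.algebraMap_eq_smul_one, TensorProduct.tmul_smul, TensorProduct.smul_tmul']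
      rfl

-- Both sides are convolution inverses of `comul`.
theorem isAntiComultiplicative_antipode : IsAntiComultiplicative (antipode R (A := A)) :=
  congr(ofConv $(left_inv_eq_right_inv comul_left_inv LinearMap.comul_right_inv)).symm

end HopfAlgebra

lemma sum_smul_eq_smul_one_of_leftIntegral {B : Type} {ι : Type*} [Ring B] [Bialgebra k B]
    {ζ : B →ₗ[k] k} (hζ : ∀ ξ : B →ₗ[k] k, conv k ξ ζ = ξ 1 • ζ) {x : B} (r : Repr k x ι) :
    ∑ i ∈ r.index, ζ (r.right i) • r.left i = ζ x • 1 := by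
  rw [← sub_eq_zero]
  refine (Module.forall_dual_apply_eq_zero_iff k _).mp fun ξ ↦ ?_
  have h := congr($(hζ ξ) x)
  simp only [conv, LinearMap.comp_apply, ← r.eq, map_sum, TensorProduct.map_tmul,
    LinearMap.mul'_apply, LinearMap.smul_apply, smul_eq_mul] at h
  simpa only [map_sub, map_sum, map_smul, smul_eq_mul, sub_eq_zero, mul_comm] using h

section ComulContract

variable {R A ι : Type*} [CommSemiring R] [Semiring A] [Bialgebra R A]

def comulContract (φ : A →ₗ[R] R) (u : A) : A →ₗ[R] A :=
  (TensorProduct.rid R A).toLinearMap ∘ₗ φ.lTensor A ∘ₗ LinearMap.mulLeft R (comul u) ∘ₗ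
    Algebra.TensorProduct.includeRight.toLinearMap

lemma comulContract_apply (φ : A →ₗ[R] R) {u : A} (r : Repr R u ι) (a : A) :
    comulContract φ u a = ∑ i ∈ r.index, φ (r.right i * a) • r.left i := by
  simp [comulContract, ← r.eq, Finset.sum_mul, map_sum]

end ComulContract

lemma comulContract_antipode_convMul_antipode {ζ : H →ₗ[k] k}
    (hζ : ∀ ξ : H →ₗ[k] k, conv k ξ ζ = ξ 1 • ζ) (u : H) :
    toConv (comulContract ζ u ∘ₗ antipode k) * toConv (antipode k) =
      toConv (Algebra.linearMap k H ∘ₗ ζ ∘ₗ LinearMap.mulLeft k u ∘ₗ antipode k) := by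
  ext y
  have h := sum_smul_eq_smul_one_of_leftIntegral hζ
    ((ℛ k u).mul ((ℛ k y).antiInduced isAntiComultiplicative_antipode))
  simp only [Repr.mul_index, Repr.mul_left, Repr.mul_right, Repr.antiInduced_index,
    Repr.antiInduced_left, Repr.antiInduced_right, Function.comp_apply, Finset.sum_product] at h
  rw [(ℛ k y).convMul_apply]
  simp only [LinearMap.comp_apply, comulContract_apply _ (ℛ k u), Finset.sum_mul, smul_mul_assoc,
    LinearMap.mulLeft_apply, Algebra.linearMap_apply, Algebra.algebraMap_eq_smul_one]
  rw [Finset.sum_comm, h]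

lemma comulContract_comp_antipode {ζ : H →ₗ[k] k}
    (hζ : ∀ ξ : H →ₗ[k] k, conv k ξ ζ = ξ 1 • ζ) (u : H) :
    comulContract ζ u ∘ₗ antipode k =
      (toConv (Algebra.linearMap k H ∘ₗ ζ ∘ₗ LinearMap.mulLeft k u ∘ₗ antipode k) *
        toConv LinearMap.id).ofConv := by
  rw [← comulContract_antipode_convMul_antipode hζ, mul_assoc, LinearMap.antipode_mul_id, mul_one]

lemma sum_leftIntegral_mul_antipode_smul {ι κ : Type*} {ζ : H →ₗ[k] k}
    (hζ : ∀ ξ : H →ₗ[k] k, conv k ξ ζ = ξ 1 • ζ) {u h : H} (ru : Repr k u ι)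
    (rh : Repr k h κ) :
    ∑ i ∈ ru.index, ζ (ru.right i * antipode k h) • ru.left i =
      ∑ j ∈ rh.index, ζ (u * antipode k (rh.left j)) • rh.right j := by
  rw [← comulContract_apply ζ ru, ← LinearMap.comp_apply, comulContract_comp_antipode hζ,
    rh.convMul_apply]
  simp [Algebra.smul_def]

-- `W2 (k ⊗ h) = ⟨w(h), k⟩`, and both identities are read as maps of `h ⊗ k`.
theorem stmt7_general (ζ : H →ₗ[k] k)
    (hint : ∀ ξ : H →ₗ[k] k, conv k ξ ζ = ξ 1 • ζ)
    (Sinv : H →ₗ[k] H)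
    (hS : Sinv ∘ₗ HopfAlgebra.antipode (R := k) = LinearMap.id ∧
      HopfAlgebra.antipode (R := k) ∘ₗ Sinv = LinearMap.id) :
    (let W2 : H ⊗[k] H →ₗ[k] k :=
      ζ ∘ₗ LinearMap.mul' k H ∘ₗ
        TensorProduct.map Sinv (HopfAlgebra.antipode (R := k)) ∘ₗ
        (TensorProduct.comm k H H).toLinearMap
    ((TensorProduct.lid k H).toLinearMap ∘ₗ TensorProduct.map W2 Sinv ∘ₗ
        (TensorProduct.assoc k H H H).symm.toLinearMap ∘ₗ
        TensorProduct.map LinearMap.id Coalgebra.comul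
      =
      (TensorProduct.rid k H).toLinearMap ∘ₗ TensorProduct.map LinearMap.id W2 ∘ₗ
        (TensorProduct.leftComm k H H H).toLinearMap ∘ₗ
        (TensorProduct.assoc k H H H).toLinearMap ∘ₗ
        TensorProduct.map Coalgebra.comul LinearMap.id) ∧
    ((TensorProduct.lid k H).toLinearMap ∘ₗ TensorProduct.map W2 LinearMap.id ∘ₗ
        (TensorProduct.assoc k H H H).symm.toLinearMap ∘ₗ
        TensorProduct.map LinearMap.id Coalgebra.comul
      =
      (TensorProduct.rid k H).toLinearMap ∘ₗ
        TensorProduct.map (HopfAlgebra.antipode (R := k)) W2 ∘ₗ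
        (TensorProduct.leftComm k H H H).toLinearMap ∘ₗ
        (TensorProduct.assoc k H H H).toLinearMap ∘ₗ
        TensorProduct.map Coalgebra.comul LinearMap.id)) := by
  have hSinv : IsAntiComultiplicative Sinv :=
    isAntiComultiplicative_antipode.of_inverse hS.1 hS.2
  have hfirst : ∀ h y : H,
      ∑ i ∈ (ℛ k y).index, ζ (Sinv ((ℛ k y).left i) * antipode k h) • Sinv ((ℛ k y).right i) =
        ∑ j ∈ (ℛ k h).index, ζ (Sinv y * antipode k ((ℛ k h).left j)) • (ℛ k h).right j :=
    fun h y ↦ sum_leftIntegral_mul_antipode_smul hint ((ℛ k y).antiInduced hSinv) (ℛ k h)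
  refine ⟨TensorProduct.ext' fun h y ↦ ?_, TensorProduct.ext' fun h y ↦ ?_⟩
  · simpa [← (ℛ k y).eq, ← (ℛ k h).eq, map_sum, TensorProduct.tmul_sum, TensorProduct.sum_tmul]
      using hfirst h y
  · have hSSinv : ∀ x, antipode k (Sinv x) = x := LinearMap.congr_fun hS.2
    simpa [← (ℛ k y).eq, ← (ℛ k h).eq, map_sum, TensorProduct.tmul_sum, TensorProduct.sum_tmul,
      hSSinv] using congr(antipode k $(hfirst h y))

/-- with `w(h) = ζ(S⁻¹(–)·S(h))` for a nonzero left integral ζ of `H*`,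
`Σ ⟨w(h),k₁⟩ S⁻¹(k₂) = Σ ⟨w(h₁),k⟩ h₂` and `Σ ⟨w(h),k₁⟩ k₂ = Σ ⟨w(h₁),k⟩ S(h₂)`,
as equalities of linear maps `H ⊗ H → H` (first slot `h`, second slot `k`). -/
theorem stmt7 [FiniteDimensional k H] (ζ : H →ₗ[k] k) (hζ : ζ ≠ 0)
    (hint : ∀ ξ : H →ₗ[k] k, conv k ξ ζ = ξ 1 • ζ)
    (Sinv : H →ₗ[k] H)
    (hS : Sinv ∘ₗ HopfAlgebra.antipode (R := k) = LinearMap.id ∧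
      HopfAlgebra.antipode (R := k) ∘ₗ Sinv = LinearMap.id) :
    (let W2 : H ⊗[k] H →ₗ[k] k :=
      ζ ∘ₗ LinearMap.mul' k H ∘ₗ
        TensorProduct.map Sinv (HopfAlgebra.antipode (R := k)) ∘ₗ
        (TensorProduct.comm k H H).toLinearMap
    ((TensorProduct.lid k H).toLinearMap ∘ₗ TensorProduct.map W2 Sinv ∘ₗ
        (TensorProduct.assoc k H H H).symm.toLinearMap ∘ₗ
        TensorProduct.map LinearMap.id Coalgebra.comul
      =
      (TensorProduct.rid k H).toLinearMap ∘ₗ TensorProduct.map LinearMap.id W2 ∘ₗ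
        (TensorProduct.leftComm k H H H).toLinearMap ∘ₗ
        (TensorProduct.assoc k H H H).toLinearMap ∘ₗ
        TensorProduct.map Coalgebra.comul LinearMap.id) ∧
    ((TensorProduct.lid k H).toLinearMap ∘ₗ TensorProduct.map W2 LinearMap.id ∘ₗ
        (TensorProduct.assoc k H H H).symm.toLinearMap ∘ₗ
        TensorProduct.map LinearMap.id Coalgebra.comul
      =
      (TensorProduct.rid k H).toLinearMap ∘ₗ
        TensorProduct.map (HopfAlgebra.antipode (R := k)) W2 ∘ₗ
        (TensorProduct.leftComm k H H H).toLinearMap ∘ₗ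
        (TensorProduct.assoc k H H H).toLinearMap ∘ₗ
        TensorProduct.map Coalgebra.comul LinearMap.id)) :=
  stmt7_general ζ hint Sinv hS
end
end

section
/- Let α∈k be invertible, γ∈kⁿ, B∈Mₙ(k), and Γ the matrix with entries Γᵢⱼ=γᵢγⱼ. The system of equations (z−α⁻¹x)·γ=2y, B(αz−x)=−yγ, B(αz+x)=−(y+α⁻¹(x·γ))γ in unknowns y∈k, x,z∈kⁿ has a nontrivial solution if and only if the matrix 2αB+Γ is singular. -/
/-!
Put `M = 2αB + Γ`, so that `M v = 2α Bv + (γ·v)γ`. Subtracting the second equation of the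
system from the third gives `M x = 0`; adding them and using the first gives `M z = 0`. A solution
with `x = z = 0` has `2y = 0`, so a nontrivial solution yields a nonzero vector in `ker M`.
Conversely, every `v ∈ ker M` gives the solution `(0, αv, v)`.
-/

open Matrix

section

variable {k ι : Type*} [Field k] [Fintype ι] {α : k} {γ : ι → k} {B : Matrix ι ι k}

theorem smul_add_vecMulVec_self_mulVec (c : k) (v : ι → k) :
    (c • B + vecMulVec γ γ) *ᵥ v = c • (B *ᵥ v) + (γ ⬝ᵥ v) • γ := by
  rw [add_mulVec, smul_mulVec, vecMulVec_mulVec, op_smul_eq_smul]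

theorem mulVec_eq_zero_of_sub_of_add {y : k} {x z : ι → k} (hα : α ≠ 0)
    (hsub : B *ᵥ (α • z - x) = -(y • γ))
    (hadd : B *ᵥ (α • z + x) = -((y + α⁻¹ * (x ⬝ᵥ γ)) • γ)) :
    ((2 * α) • B + vecMulVec γ γ) *ᵥ x = 0 := by
  have hBx : (2 : k) • (B *ᵥ x) = -((α⁻¹ * (x ⬝ᵥ γ)) • γ) := by
    rw [← mulVec_smul, show (2 : k) • x = (α • z + x) - (α • z - x) by module, mulVec_sub,
      hadd, hsub]
    module
  rw [smul_add_vecMulVec_self_mulVec, mul_comm, mul_smul, hBx, dotProduct_comm]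
  match_scalars
  field_simp
  ring

theorem mulVec_eq_zero_of_dotProduct_of_sub_of_add {y : k} {x z : ι → k}
    (hdot : (z - α⁻¹ • x) ⬝ᵥ γ = 2 * y)
    (hsub : B *ᵥ (α • z - x) = -(y • γ))
    (hadd : B *ᵥ (α • z + x) = -((y + α⁻¹ * (x ⬝ᵥ γ)) • γ)) :
    ((2 * α) • B + vecMulVec γ γ) *ᵥ z = 0 := by
  have hBz : (2 * α) • (B *ᵥ z) = -((y + y + α⁻¹ * (x ⬝ᵥ γ)) • γ) := by
    rw [← mulVec_smul, show (2 * α) • z = (α • z - x) + (α • z + x) by module, mulVec_add,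
      hsub, hadd]
    module
  rw [sub_dotProduct, smul_dotProduct, smul_eq_mul] at hdot
  rw [smul_add_vecMulVec_self_mulVec, hBz, dotProduct_comm γ z]
  match_scalars
  linear_combination hdot

theorem solution_of_mulVec_eq_zero {v : ι → k} (hα : α ≠ 0)
    (hv : ((2 * α) • B + vecMulVec γ γ) *ᵥ v = 0) :
    (v - α⁻¹ • α • v) ⬝ᵥ γ = 2 * 0 ∧
      B *ᵥ (α • v - α • v) = -((0 : k) • γ) ∧
      B *ᵥ (α • v + α • v) = -((0 + α⁻¹ * (α • v ⬝ᵥ γ)) • γ) := by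
  rw [smul_add_vecMulVec_self_mulVec] at hv
  refine ⟨by simp [smul_smul, hα], by simp, ?_⟩
  rw [show α • v + α • v = (2 * α) • v by module, mulVec_smul, eq_neg_of_add_eq_zero_left hv,
    smul_dotProduct, smul_eq_mul, dotProduct_comm v, zero_add, inv_mul_cancel_left₀ hα]

end

/-- the system `(z−α⁻¹x)·γ = 2y`, `B(αz−x) = −yγ`,
`B(αz+x) = −(y+α⁻¹(x·γ))γ` has a nontrivial solution `(y,x,z)` iff `2αB+Γ` is
singular, where `Γᵢⱼ = γᵢγⱼ`. -/
theorem stmt14 {k : Type} [Field k] (hchar : (2 : k) ≠ 0)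
    (n : ℕ) (α : k) (hα : α ≠ 0) (γ : Fin n → k) (B : Matrix (Fin n) (Fin n) k) :
    (∃ (y : k) (x z : Fin n → k),
        ¬ (y = 0 ∧ x = 0 ∧ z = 0) ∧
        (z - α⁻¹ • x) ⬝ᵥ γ = 2 * y ∧
        B.mulVec (α • z - x) = -(y • γ) ∧
        B.mulVec (α • z + x) = -((y + α⁻¹ * (x ⬝ᵥ γ)) • γ)) ↔
      ((2 * α) • B + Matrix.vecMulVec γ γ).det = 0 := by
  rw [← exists_mulVec_eq_zero_iff]
  constructor
  · rintro ⟨y, x, z, hnontriv, hdot, hsub, hadd⟩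
    by_cases hx : x = 0
    · refine ⟨z, fun hz ↦ hnontriv ⟨?_, hx, hz⟩,
        mulVec_eq_zero_of_dotProduct_of_sub_of_add hdot hsub hadd⟩
      simpa [hx, hz, hchar] using hdot.symm
    · exact ⟨x, hx, mulVec_eq_zero_of_sub_of_add hα hsub hadd⟩
  · rintro ⟨v, hv, hMv⟩
    exact ⟨0, α • v, v, fun h ↦ hv h.2.2, solution_of_mulVec_eq_zero hα hMv⟩
end
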